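/- Let Λ ⊆ ℝⁿ be a full-rank lattice, let ε > 0, and let s > 0 satisfy ρ_s(Λ \ {0}) ≤ ε. Then for every r with 0 < r ≤ (s/2)·sqrt(n/(2π)), we have Overlap(Λ, r) ≤ 2ε. -/

import Mathlib

open MeasureTheory

/-- The Gaussian measure `γ_s(A) = s^{-n} ∫_A exp(-π‖x‖²/s²) dx`. -/
noncomputable def gaussMeasure (n : ℕ) (s : ℝ) (A : Set (EuclideanSpace ℝ (Fin n))) : ℝ :=
  (s ^ n)⁻¹ * ∫ x in A, Real.exp (-Real.pi * ‖x‖ ^ 2 / s ^ 2)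

/-- The discrete Gaussian mass `ρ_s(A) = ∑_{x ∈ A} exp(-π‖x‖²/s²)`. -/
noncomputable def rhoSet (n : ℕ) (s : ℝ) (A : Set (EuclideanSpace ℝ (Fin n))) : ℝ :=
  ∑' x : A, Real.exp (-Real.pi * ‖(x : EuclideanSpace ℝ (Fin n))‖ ^ 2 / s ^ 2)

/-- `Λ` is a full-rank lattice in ℝⁿ: the set of integer combinations of an ℝ-basis. -/
def IsLattice {n : ℕ} (Λ : Set (EuclideanSpace ℝ (Fin n))) : Prop :=
  ∃ b : Module.Basis (Fin n) ℝ (EuclideanSpace ℝ (Fin n)),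
    Λ = {x | ∃ z : Fin n → ℤ, x = ∑ i, (z i : ℝ) • b i}

/-- The (closed) Voronoi cell of a lattice. -/
def voronoiCell {n : ℕ} (Λ : Set (EuclideanSpace ℝ (Fin n))) :
    Set (EuclideanSpace ℝ (Fin n)) :=
  {x | ∀ y ∈ Λ, ‖x‖ ≤ ‖x - y‖}

/-- The fraction of a ball of radius `r` centered at a lattice point overlapping with
balls of equal radius centered at all other lattice points. -/
noncomputable def overlapFrac {n : ℕ} (Λ : Set (EuclideanSpace ℝ (Fin n))) (r : ℝ) : ℝ :=
  (volume (⋃ y ∈ Λ \ {0}, Metric.closedBall (0 : EuclideanSpace ℝ (Fin n)) r ∩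
      Metric.closedBall y r)).toReal /
    (volume (Metric.closedBall (0 : EuclideanSpace ℝ (Fin n)) r)).toReal

/-! The lens `B(0, r) ∩ B(y, r)` lies in the ball of radius `√(r² - ‖y‖²/4)` about `y / 2`
(Apollonius), so its volume is at most `(1 - ‖y‖²/(4r²))^(n/2) ≤ exp(-n‖y‖²/(8r²))` times that of
`B(0, r)`; the radius condition, i.e. `8πr² ≤ ns²`, bounds this by `ρ_s(y)`. A union bound over
`y ∈ Λ \ {0}` gives `Overlap(Λ, r) ≤ ρ_s(Λ \ {0}) ≤ ε`. The Gaussian sum converges because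
`exp(-x) ≤ k!/xᵏ` dominates it by a convergent `p`-series over the lattice. -/

open Metric Module Set

section Geometry

variable {V P : Type*} [NormedAddCommGroup V] [InnerProductSpace ℝ V] [MetricSpace P]
  [NormedAddTorsor V P]

theorem closedBall_inter_closedBall_subset_closedBall_midpoint (b c : P) (r : ℝ) :
    closedBall b r ∩ closedBall c r ⊆
      closedBall (midpoint ℝ b c) √(r ^ 2 - (dist b c / 2) ^ 2) := by
  rintro x ⟨hb, hc⟩
  have apollonius :=
    EuclideanGeometry.dist_sq_add_dist_sq_eq_two_mul_dist_midpoint_sq_add_half_dist_sq x b c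
  rw [mem_closedBall] at hb hc ⊢
  refine Real.le_sqrt_of_sq_le ?_
  nlinarith [dist_nonneg (x := x) (y := b), dist_nonneg (x := x) (y := c)]

end Geometry

theorem Real.sqrt_sq_sub_sq_le_mul_exp {r : ℝ} (hr : 0 < r) (t : ℝ) :
    √(r ^ 2 - t ^ 2) ≤ r * Real.exp (-t ^ 2 / (2 * r ^ 2)) := by
  rw [Real.sqrt_le_left (by positivity), mul_pow, ← Real.exp_nat_mul]
  have htwo : (↑(2 : ℕ) : ℝ) * (-t ^ 2 / (2 * r ^ 2)) = -t ^ 2 / r ^ 2 := by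
    push_cast; field_simp
  rw [htwo]
  calc r ^ 2 - t ^ 2 = r ^ 2 * (-t ^ 2 / r ^ 2 + 1) := by field_simp; ring
    _ ≤ r ^ 2 * Real.exp (-t ^ 2 / r ^ 2) := by gcongr; exact Real.add_one_le_exp _

theorem Real.exp_neg_le_factorial_div_pow {x : ℝ} (hx : 0 < x) (k : ℕ) :
    Real.exp (-x) ≤ k.factorial / x ^ k := by
  rw [Real.exp_neg, inv_le_comm₀ (Real.exp_pos x) (by positivity), inv_div]
  exact Real.pow_div_factorial_le_exp x hx.le k

section Volume

variable {E : Type*} [NormedAddCommGroup E] [InnerProductSpace ℝ E] [FiniteDimensional ℝ E]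
  [MeasurableSpace E] [BorelSpace E] (μ : Measure E) [μ.IsAddHaarMeasure]

theorem measure_closedBall_inter_closedBall_le {r : ℝ} (hr : 0 < r) (y : E) :
    μ (closedBall 0 r ∩ closedBall y r) ≤
      ENNReal.ofReal (Real.exp (-finrank ℝ E * ‖y‖ ^ 2 / (8 * r ^ 2))) * μ (closedBall 0 r) := by
  set e := Real.exp (-(‖y‖ / 2) ^ 2 / (2 * r ^ 2))
  have hshrink : e ^ finrank ℝ E = Real.exp (-finrank ℝ E * ‖y‖ ^ 2 / (8 * r ^ 2)) := by
    rw [← Real.exp_nat_mul]; ring_nf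
  calc μ (closedBall 0 r ∩ closedBall y r)
      ≤ μ (closedBall (midpoint ℝ 0 y) (e * r)) := by
        refine measure_mono ((closedBall_inter_closedBall_subset_closedBall_midpoint 0 y r).trans
          (closedBall_subset_closedBall ?_))
        rw [dist_zero_left, mul_comm]
        exact Real.sqrt_sq_sub_sq_le_mul_exp hr _
    _ = _ := by rw [μ.addHaar_closedBall_mul _ (Real.exp_pos _).le hr.le, hshrink]

end Volume

theorem ZLattice.summable_exp_neg_mul_norm_sq {E : Type*} [NormedAddCommGroup E]
    [NormedSpace ℝ E] [FiniteDimensional ℝ E] (L : Submodule ℤ E) [DiscreteTopology L]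
    {c : ℝ} (hc : 0 < c) : Summable fun z : L => Real.exp (-c * ‖(z : E)‖ ^ 2) := by
  set k := finrank ℤ L + 1
  have hpow : Summable fun z : L => ‖z‖ ^ (-((2 * k : ℕ) : ℤ)) :=
    ZLattice.summable_norm_zpow L _ (by omega)
  refine Summable.of_norm_bounded_eventually (hpow.mul_left (k.factorial / c ^ k)) ?_
  filter_upwards [(Set.finite_singleton (0 : L)).compl_mem_cofinite] with z hz
  have hz0 : 0 < ‖z‖ := norm_pos_iff.mpr hz
  rw [Real.norm_of_nonneg (Real.exp_pos _).le, neg_mul]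
  calc Real.exp (-(c * ‖(z : E)‖ ^ 2)) ≤ k.factorial / (c * ‖z‖ ^ 2) ^ k :=
        Real.exp_neg_le_factorial_div_pow (by positivity) k
    _ = k.factorial / c ^ k * ‖z‖ ^ (-((2 * k : ℕ) : ℤ)) := by
        rw [zpow_neg, zpow_natCast, mul_pow, ← pow_mul]; ring

theorem measure_biUnion_le_ofReal_tsum_mul {α X : Type*} [MeasurableSpace X] (μ : Measure X)
    {S : Set α} (hS : S.Countable) {A : α → Set X} {w : α → ℝ} (hw0 : ∀ y ∈ S, 0 ≤ w y)
    (hw : Summable fun y : S => w y) {V : ENNReal}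
    (hA : ∀ y ∈ S, μ (A y) ≤ ENNReal.ofReal (w y) * V) :
    μ (⋃ y ∈ S, A y) ≤ ENNReal.ofReal (∑' y : S, w y) * V :=
  calc μ (⋃ y ∈ S, A y) ≤ ∑' y : S, μ (A y) := measure_biUnion_le μ hS A
    _ ≤ ∑' y : S, ENNReal.ofReal (w y) * V := ENNReal.tsum_le_tsum fun y => hA y y.2
    _ = _ := by
      rw [ENNReal.tsum_mul_right, ENNReal.ofReal_tsum_of_nonneg (fun y : S => hw0 y y.2) hw]

theorem eight_pi_mul_sq_le_of_le_mul_sqrt {n : ℕ} {r s : ℝ} (hr : 0 ≤ r)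
    (h : r ≤ s / 2 * √(n / (2 * Real.pi))) : 8 * Real.pi * r ^ 2 ≤ n * s ^ 2 := by
  have h2 := pow_le_pow_left₀ hr h 2
  rw [mul_pow, Real.sq_sqrt (by positivity)] at h2
  have := Real.pi_pos
  field_simp at h2
  linarith

theorem IsLattice.exists_basis_eq_span {n : ℕ} {Λ : Set (EuclideanSpace ℝ (Fin n))}
    (hΛ : IsLattice Λ) :
    ∃ b : Basis (Fin n) ℝ (EuclideanSpace ℝ (Fin n)), Λ = Submodule.span ℤ (range b) := by
  obtain ⟨b, rfl⟩ := hΛ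
  refine ⟨b, Set.ext fun x => ?_⟩
  simp only [mem_ofPred_eq, SetLike.mem_coe, Submodule.mem_span_range_iff_exists_fun,
    Int.cast_smul_eq_zsmul, eq_comm]

theorem IsLattice.countable {n : ℕ} {Λ : Set (EuclideanSpace ℝ (Fin n))} (hΛ : IsLattice Λ) :
    Λ.Countable := by
  obtain ⟨b, rfl⟩ := hΛ
  refine (countable_range fun z : Fin n → ℤ => ∑ i, (z i : ℝ) • b i).mono ?_
  rintro x ⟨z, rfl⟩
  exact ⟨z, rfl⟩

theorem IsLattice.summable_exp_neg_pi_mul_norm_sq_div_sq {n : ℕ}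
    {Λ : Set (EuclideanSpace ℝ (Fin n))} (hΛ : IsLattice Λ) {s : ℝ} (hs : s ≠ 0) :
    Summable fun x : Λ => Real.exp (-Real.pi * ‖(x : EuclideanSpace ℝ (Fin n))‖ ^ 2 / s ^ 2) := by
  obtain ⟨b, rfl⟩ := hΛ.exists_basis_eq_span
  refine (ZLattice.summable_exp_neg_mul_norm_sq (Submodule.span ℤ (range b))
    (c := Real.pi / s ^ 2) (by positivity)).congr fun x => ?_
  congr 1
  ring

theorem rhoSet_nonneg (n : ℕ) (s : ℝ) (A : Set (EuclideanSpace ℝ (Fin n))) :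
    0 ≤ rhoSet n s A :=
  tsum_nonneg fun _ => (Real.exp_pos _).le

theorem overlapFrac_le_rhoSet {n : ℕ} {Λ : Set (EuclideanSpace ℝ (Fin n))} {r s : ℝ}
    (hΛ : (Λ \ {0}).Countable)
    (hsum : Summable fun x : ↥(Λ \ {0}) =>
      Real.exp (-Real.pi * ‖(x : EuclideanSpace ℝ (Fin n))‖ ^ 2 / s ^ 2))
    (hr : 0 < r) (hrs : 8 * Real.pi * r ^ 2 ≤ n * s ^ 2) :
    overlapFrac Λ r ≤ rhoSet n s (Λ \ {0}) := by
  set V := volume (closedBall (0 : EuclideanSpace ℝ (Fin n)) r)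
  have hV : V ≠ ⊤ := measure_closedBall_lt_top.ne
  have hV0 : V ≠ 0 := (measure_closedBall_pos volume 0 hr).ne'
  have hs : 0 < s ^ 2 :=
    pos_of_mul_pos_right ((by positivity : 0 < 8 * Real.pi * r ^ 2).trans_le hrs) n.cast_nonneg
  have hpair : ∀ y : EuclideanSpace ℝ (Fin n), volume (closedBall 0 r ∩ closedBall y r) ≤
      ENNReal.ofReal (Real.exp (-Real.pi * ‖y‖ ^ 2 / s ^ 2)) * V := by
    intro y
    refine (measure_closedBall_inter_closedBall_le volume hr y).trans ?_
    refine mul_le_mul_left (ENNReal.ofReal_le_ofReal (Real.exp_le_exp.mpr ?_)) V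
    rw [finrank_euclideanSpace_fin, neg_mul, neg_mul, neg_div, neg_div, neg_le_neg_iff,
      div_le_div_iff₀ hs (by positivity)]
    nlinarith [sq_nonneg ‖y‖]
  have hU := measure_biUnion_le_ofReal_tsum_mul volume hΛ
    (A := fun y => closedBall 0 r ∩ closedBall y r)
    (w := fun y => Real.exp (-Real.pi * ‖y‖ ^ 2 / s ^ 2))
    (fun _ _ => (Real.exp_pos _).le) hsum (fun y _ => hpair y)
  rw [overlapFrac, div_le_iff₀ (ENNReal.toReal_pos hV0 hV)]
  calc _ ≤ (ENNReal.ofReal (rhoSet n s (Λ \ {0})) * V).toReal :=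
        ENNReal.toReal_mono (by finiteness) hU
    _ = _ := by
        rw [ENNReal.toReal_mul, ENNReal.toReal_ofReal (rhoSet_nonneg n s _)]

theorem ball_overlap_char_part1_general (n : ℕ) (Λ : Set (EuclideanSpace ℝ (Fin n)))
    (hΛ : IsLattice Λ) (ε : ℝ) (s : ℝ)
    (hρ : rhoSet n s (Λ \ {0}) ≤ ε) :
    ∀ r : ℝ, 0 < r → r ≤ (s / 2) * Real.sqrt (n / (2 * Real.pi)) →
      overlapFrac Λ r ≤ 2 * ε := by
  intro r hr hrs
  have h8 := eight_pi_mul_sq_le_of_le_mul_sqrt hr.le hrs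
  have hs : s ≠ 0 := by rintro rfl; nlinarith [Real.pi_pos]
  have hρ0 := rhoSet_nonneg n s (Λ \ {0})
  have hsum := (hΛ.summable_exp_neg_pi_mul_norm_sq_div_sq hs).comp_injective
    (inclusion_injective (sdiff_subset : Λ \ {0} ⊆ Λ))
  have hoverlap := overlapFrac_le_rhoSet (hΛ.countable.mono sdiff_subset) hsum hr h8
  linarith

theorem ball_overlap_char_part1 (n : ℕ) (hn : 1 ≤ n) (Λ : Set (EuclideanSpace ℝ (Fin n)))
    (hΛ : IsLattice Λ) (ε : ℝ) (hε : 0 < ε) (s : ℝ) (hs : 0 < s)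
    (hρ : rhoSet n s (Λ \ {0}) ≤ ε) :
    ∀ r : ℝ, 0 < r → r ≤ (s / 2) * Real.sqrt (n / (2 * Real.pi)) →
      overlapFrac Λ r ≤ 2 * ε :=
  ball_overlap_char_part1_general n Λ hΛ ε s hρ
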